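/- Let I ⊆ ℝ be an open interval, b, c, f₅ : ℝ → ℝ with c(x) ≠ 0 on I, let ε ∈ {1, −1}, and suppose the function y_p(x) = −b(x)/(2c(x)) + ε·f₅(x) is differentiable on I. Define a(x) = ( b(x)² − 4c(x)²f₅(x)² )/(4c(x)) + y_p'(x). Let B be differentiable on I with B'(x) = 2ε·c(x)·f₅(x), and G differentiable on I with G'(x) = c(x)·exp(B(x)). Then y_p solves the Riccati equation on I, and for every constant C ∈ ℝ the function y(x) = y_p(x) + exp(B(x))/(C − G(x)) satisfies y'(x) = a(x) + b(x)y(x) + c(x)y(x)² at every x ∈ I with C − G(x) ≠ 0. -/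

import Mathlib

/-!
Completing the square shows that `y_p = -b/(2c) + ε f₅` is a particular solution: with
`ε² = 1`, `a + b y_p + c y_p² = a - (b² - 4c²f₅²)/(4c)`, which is `y_p'` by the choice of `a`.
Writing `y = y_p + u`, the Riccati equation becomes the Bernoulli equation
`u' = (b + 2c y_p) u + c u² = B' u + c u²`, and `u = exp B / (C - G)` solves it because
`G' = c exp B`.
-/

open Real Set

def riccatiRHS (a b c : ℝ → ℝ) (x y : ℝ) : ℝ := a x + b x * y + c x * y ^ 2

theorem riccatiRHS_add (a b c : ℝ → ℝ) (x y u : ℝ) :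
    riccatiRHS a b c x (y + u) =
      riccatiRHS a b c x y + ((b x + 2 * c x * y) * u + c x * u ^ 2) := by
  unfold riccatiRHS
  ring

theorem riccatiRHS_neg_div_add_mul {a b c f : ℝ → ℝ} {x ε δ : ℝ} (hc : c x ≠ 0)
    (hε : ε ^ 2 = 1) (ha : a x = (b x ^ 2 - 4 * c x ^ 2 * f x ^ 2) / (4 * c x) + δ) :
    riccatiRHS a b c x (-b x / (2 * c x) + ε * f x) = δ := by
  unfold riccatiRHS
  rw [ha]
  field_simp
  linear_combination 16 * c x ^ 2 * f x ^ 2 * hε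

theorem HasDerivAt.riccati_add {a b c y u : ℝ → ℝ} {x : ℝ}
    (hy : HasDerivAt y (riccatiRHS a b c x (y x)) x)
    (hu : HasDerivAt u ((b x + 2 * c x * y x) * u x + c x * u x ^ 2) x) :
    HasDerivAt (fun t => y t + u t) (riccatiRHS a b c x (y x + u x)) x := by
  rw [riccatiRHS_add]
  exact hy.add hu

theorem hasDerivAt_exp_div_const_sub {B G : ℝ → ℝ} {β γ C x : ℝ} (hB : HasDerivAt B β x)
    (hG : HasDerivAt G (γ * exp (B x)) x) (hCG : C - G x ≠ 0) :
    HasDerivAt (fun t => exp (B t) / (C - G t))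
      (β * (exp (B x) / (C - G x)) + γ * (exp (B x) / (C - G x)) ^ 2) x := by
  refine (hB.exp.fun_div (hG.const_sub C) hCG).congr_deriv ?_
  field_simp
  ring

/-- Theorem 10 (Case 10): with `y_p = −b/(2c) + ε·f₅` differentiable with
derivative `d`, `a = (b² − 4c²f₅²)/(4c) + d`, `B' = 2εcf₅` and
`G' = c · exp B`, the function `y_p` solves the Riccati equation, and
`y = y_p + exp B / (C − G)` solves it wherever `C − G ≠ 0`. -/
theorem riccati_case10
    (p q : ℝ) (a b c f₅ B G d : ℝ → ℝ) (ε : ℝ) (hε : ε = 1 ∨ ε = -1)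
    (hc : ∀ x ∈ Set.Ioo p q, c x ≠ 0)
    (hyp : ∀ x ∈ Set.Ioo p q,
      HasDerivAt (fun t => -b t / (2 * c t) + ε * f₅ t) (d x) x)
    (ha : ∀ x ∈ Set.Ioo p q,
      a x = (b x ^ 2 - 4 * c x ^ 2 * f₅ x ^ 2) / (4 * c x) + d x)
    (hB : ∀ x ∈ Set.Ioo p q, HasDerivAt B (2 * ε * c x * f₅ x) x)
    (hG : ∀ x ∈ Set.Ioo p q, HasDerivAt G (c x * Real.exp (B x)) x)
    (C : ℝ) :
    (∀ x ∈ Set.Ioo p q,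
      HasDerivAt (fun t => -b t / (2 * c t) + ε * f₅ t)
        (a x + b x * (-b x / (2 * c x) + ε * f₅ x)
          + c x * (-b x / (2 * c x) + ε * f₅ x) ^ 2) x) ∧
    (∀ x ∈ Set.Ioo p q, C - G x ≠ 0 →
      HasDerivAt (fun t =>
          -b t / (2 * c t) + ε * f₅ t + Real.exp (B t) / (C - G t))
        (a x + b x * (-b x / (2 * c x) + ε * f₅ x + Real.exp (B x) / (C - G x))
          + c x * (-b x / (2 * c x) + ε * f₅ x
            + Real.exp (B x) / (C - G x)) ^ 2) x) := by
  have hε2 : ε ^ 2 = 1 := by rcases hε with rfl | rfl <;> norm_num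
  have hpart : ∀ x ∈ Ioo p q, HasDerivAt (fun t => -b t / (2 * c t) + ε * f₅ t)
      (riccatiRHS a b c x (-b x / (2 * c x) + ε * f₅ x)) x := fun x hx => by
    rw [riccatiRHS_neg_div_add_mul (hc x hx) hε2 (ha x hx)]
    exact hyp x hx
  refine ⟨hpart, fun x hx hCG => ?_⟩
  have hB' : HasDerivAt B (b x + 2 * c x * (-b x / (2 * c x) + ε * f₅ x)) x :=
    (hB x hx).congr_deriv (by field_simp [hc x hx]; ring)
  exact (hpart x hx).riccati_add (u := fun t => exp (B t) / (C - G t))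
    (hasDerivAt_exp_div_const_sub hB' (hG x hx) hCG)
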